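/- Let R be a commutative ring with involution and W_L an invertible n×n matrix over R, W_{Lη} an n×m matrix, W_η an m×m matrix, W_{ηL} = (W_{Lη})*. Form the block matrix W_L'' = W_L ⊕ (ε) obtained by adding one extra row and column with diagonal entry ε ∈ {1, −1} and zeros elsewhere, and extend W_{Lη} by a zero row to get W_{Lη}''. Then W_L'' is invertible and W_η − (W_{Lη}'')*·(W_L'')⁻¹·W_{Lη}'' = W_η − W_{ηL}·W_L⁻¹·W_{Lη}. (Invariance of the winding matrix under the blow-up Kirby move KI.) -/
import Mathlib

open Matrix

/-- Invariance of the winding matrix under the blow-up Kirby move KI: adding a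
split `±1`-framed component to the surgery link enlarges `W_L` by a diagonal
block `(ε)` with `ε = ±1` and extends `W_{Lη}` by a zero row; the enlarged
matrix is still invertible and the Schur complement is unchanged. -/
theorem windingMatrix_invariant_blowup
    {R : Type*} [CommRing R] [StarRing R] {n m : ℕ}
    (W_L : Matrix (Fin n) (Fin n) R) (W_η : Matrix (Fin m) (Fin m) R)
    (W_Lη : Matrix (Fin n) (Fin m) R)
    (hL : IsUnit W_L) (ε : R) (hε : ε = 1 ∨ ε = -1) :
    let W_ηL := W_Lηᴴ
    let W_L'' : Matrix (Fin n ⊕ Fin 1) (Fin n ⊕ Fin 1) R :=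
      Matrix.fromBlocks W_L 0 0 (ε • (1 : Matrix (Fin 1) (Fin 1) R))
    let W_Lη'' : Matrix (Fin n ⊕ Fin 1) (Fin m) R :=
      Matrix.of fun i j => Sum.casesOn i (fun i' => W_Lη i' j) (fun _ => 0)
    IsUnit W_L'' ∧
      W_η - W_Lη''ᴴ * W_L''⁻¹ * W_Lη'' = W_η - W_ηL * W_L⁻¹ * W_Lη := by
  intro W_ηL W_L'' W_Lη''
  have hε2 : ε * ε = 1 := by rcases hε with h | h <;> simp [h]
  have hmul : W_L'' * Matrix.fromBlocks W_L⁻¹ 0 0 (ε • (1 : Matrix (Fin 1) (Fin 1) R)) = 1 := by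
    simp [W_L'', Matrix.fromBlocks_multiply, Matrix.mul_nonsing_inv _ (isUnit_iff_isUnit_det _ |>.mp hL),
      smul_smul, hε2, Matrix.fromBlocks_one]
  have hunit : IsUnit W_L'' := @isUnit_of_invertible _ _ _ (invertibleOfRightInverse _ _ hmul)
  refine ⟨hunit, ?_⟩
  have hinv : W_L''⁻¹ = Matrix.fromBlocks W_L⁻¹ 0 0 (ε • (1 : Matrix (Fin 1) (Fin 1) R)) :=
    Matrix.inv_eq_right_inv hmul
  rw [hinv]
  congr 1
  ext i j
  simp [W_Lη'', W_ηL, Matrix.mul_apply, Fintype.sum_sum_type, Matrix.fromBlocks,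
    Matrix.conjTranspose_apply, Finset.mul_sum, Finset.sum_mul]
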